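/- Say a reduced finite type ℂ-scheme X has property (P) if every invertible regular function on X is locally constant. Then: (a) if f : X → Y is a surjective morphism of reduced finite type ℂ-schemes and X has property (P), then Y has property (P); (b) if X and Y both have property (P), then X × Y has property (P). -/

import Mathlib

/-!
STATEMENT 7: Property (P) for reduced finite type ℂ-schemes.

We work with (the coordinate rings of) reduced finite type affine ℂ-schemes.  An invertible
regular function on `X = Spec R` is a unit of `R`; it is *locally constant* precisely when it
lies in the ℂ-span of the idempotents of `R` (idempotents correspond to unions of connected
components, so the ℂ-span of idempotents is exactly the ring of locally constant ℂ-valued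
regular functions).  A surjective morphism `X → Y` of schemes corresponds to a ℂ-algebra map
`φ : S →ₐ[ℂ] R` inducing a surjection `Spec R → Spec S`, and the product `X × Y` corresponds
to the tensor product `R ⊗[ℂ] S`.

(a) If `f : X → Y` is surjective and `X` has property (P), then `Y` has property (P).
(b) If `X` and `Y` have property (P), then so does `X × Y`.
-/

open TensorProduct

/-- A unit is "locally constant" iff it lies in the ℂ-span of the idempotents. -/
def IsLocConst (R : Type*) [CommRing R] [Algebra ℂ R] (u : R) : Prop :=
  u ∈ Submodule.span ℂ {e : R | IsIdempotentElem e}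

/-- Property (P): every invertible regular function is locally constant. -/
def PropP (R : Type*) [CommRing R] [Algebra ℂ R] : Prop :=
  ∀ u : Rˣ, IsLocConst R (u : R)

/-!
In a reduced algebra over an algebraically closed field, an element lies in the span of the
idempotents iff it is integral, because its minimal polynomial is then squarefree with distinct
roots `c`, and Lagrange interpolation at these roots produces the idempotents. For (a), surjectivity
on spectra makes `φ` injective (`S` is reduced), and integrality descends along injective maps.

For (b), let `w` be a unit of `R ⊗ S`. For ℂ-points `x` of `R` and `y` of `S` the specializations
`w(x, ·)` and `w(·, y)` are units, hence locally constant. Since every `w(·, y)` is constant on an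
irreducible component of `Spec R`, the function `w(x, ·)` depends only on a component through `x`,
so there are finitely many such functions, each taking finitely many values. Hence `w` takes
finitely many values `c`. By the Nullstellensatz, ℂ-points separate `R`, `S` and `R ⊗ S`, so
`∏ (w - c) = 0`, and interpolation again writes `w` as a combination of idempotents.
-/

open Polynomial

section Idempotents

variable {K A : Type*} [Field K] [CommRing A] [Algebra K A]

lemma aeval_eq_zero_of_prod_sub_eq_zero {u : A} {t : Finset K}
    (h : ∏ c ∈ t, (u - algebraMap K A c) = 0) {p : K[X]} (hp : ∀ c ∈ t, p.eval c = 0) :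
    aeval u p = 0 := by
  obtain ⟨q, rfl⟩ : ∏ c ∈ t, (X - C c) ∣ p :=
    Finset.prod_dvd_of_coprime
      ((pairwise_coprime_X_sub_C (K := K) Function.injective_id).set_pairwise _)
      fun c hc => dvd_iff_isRoot.mpr (hp c hc)
  simp [map_prod, h]

/-- The idempotents are the Lagrange basis polynomials of `t` evaluated at `u`. -/
lemma mem_span_idempotents_of_prod_sub_eq_zero {u : A} {t : Finset K}
    (h : ∏ c ∈ t, (u - algebraMap K A c) = 0) :
    u ∈ Submodule.span K {e : A | IsIdempotentElem e} := by
  classical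
  have eval_basis (c d : K) (hc : c ∈ t) (hd : d ∈ t) :
      (Lagrange.basis t id c).eval d = if c = d then 1 else 0 := by
    split_ifs with hcd
    · subst hcd
      exact Lagrange.eval_basis_self (Set.injOn_id _) hc
    · exact Lagrange.eval_basis_of_ne (v := id) hcd hd
  have hidem (c : K) (hc : c ∈ t) : IsIdempotentElem (aeval u (Lagrange.basis t id c)) := by
    rw [IsIdempotentElem, ← map_mul, ← sub_eq_zero, ← map_sub]
    refine aeval_eq_zero_of_prod_sub_eq_zero h fun d hd => ?_
    simp only [eval_sub, eval_mul, eval_basis c d hc hd]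
    split_ifs <;> simp
  have hu : u = ∑ c ∈ t, c • aeval u (Lagrange.basis t id c) := by
    rw [← sub_eq_zero]
    have := aeval_eq_zero_of_prod_sub_eq_zero h
      (p := X - ∑ c ∈ t, C c * Lagrange.basis t id c) fun d hd => by
        simp only [eval_sub, eval_X, eval_finsetSum, eval_mul, eval_C]
        rw [Finset.sum_eq_single_of_mem d hd fun c hc hcd => by simp [eval_basis c d hc hd, hcd]]
        simp [eval_basis d d hd hd]
    simpa [map_sum, Algebra.smul_def] using this
  rw [hu]
  exact Submodule.sum_mem _ fun c hc => Submodule.smul_mem _ _ (Submodule.subset_span (hidem c hc))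

lemma isIntegral_of_mem_span_idempotents {u : A}
    (hu : u ∈ Submodule.span K {e : A | IsIdempotentElem e}) : IsIntegral K u := by
  refine (Submodule.span_le (p := (integralClosure K A).toSubmodule)).mpr
    (fun e (he : IsIdempotentElem e) => ?_) hu
  refine ⟨X ^ 2 - X, (monic_X_pow 2).sub_of_left (by rw [degree_X, degree_X_pow]; norm_num), ?_⟩
  simp [pow_two, he.eq]

lemma IsIntegral.exists_prod_sub_eq_zero [IsAlgClosed K] [IsReduced A] {u : A}
    (hu : IsIntegral K u) : ∃ t : Finset K, ∏ c ∈ t, (u - algebraMap K A c) = 0 := by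
  classical
  have hsep : (minpoly K u).Separable := PerfectField.separable_iff_squarefree.mpr
    ((minpoly.isRadical K u).squarefree (minpoly.ne_zero hu))
  refine ⟨(minpoly K u).roots.toFinset, ?_⟩
  have hprod := (IsAlgClosed.splits (minpoly K u)).eq_prod_roots_of_monic (minpoly.monic hu)
  rw [← (nodup_roots hsep).dedup, ← Multiset.toFinset_val, ← Finset.prod_eq_multiset_prod] at hprod
  simpa [map_multiset_prod, Multiset.map_map] using (congrArg (aeval u) hprod).symm

lemma mem_span_idempotents_iff_isIntegral [IsAlgClosed K] [IsReduced A] {u : A} :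
    u ∈ Submodule.span K {e : A | IsIdempotentElem e} ↔ IsIntegral K u :=
  ⟨isIntegral_of_mem_span_idempotents, fun hu =>
    let ⟨_, ht⟩ := hu.exists_prod_sub_eq_zero
    mem_span_idempotents_of_prod_sub_eq_zero ht⟩

lemma IsIntegral.finite_range_algHom_apply {u : A} (hu : IsIntegral K u) :
    (Set.range fun θ : A →ₐ[K] K => θ u).Finite := by
  classical
  obtain ⟨p, hp, hpu⟩ := hu
  refine p.roots.toFinset.finite_toSet.subset ?_
  rintro _ ⟨θ, rfl⟩
  have : aeval (θ u) p = 0 := by rw [aeval_algHom_apply, aeval_def, hpu, map_zero]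
  simpa [mem_roots hp.ne_zero, hp.ne_zero] using this

lemma AlgHom.apply_eq_of_mem_span_idempotents (θ θ' : A →ₐ[K] K) (p : Ideal A) [p.IsPrime]
    (hθ : p ≤ RingHom.ker θ) (hθ' : p ≤ RingHom.ker θ') {u : A}
    (hu : u ∈ Submodule.span K {e : A | IsIdempotentElem e}) : θ u = θ' u := by
  refine LinearMap.eqOn_span (f := θ.toLinearMap) (g := θ'.toLinearMap) (fun e he => ?_) hu
  by_cases hep : e ∈ p
  · simp [RingHom.mem_ker.mp (hθ hep), RingHom.mem_ker.mp (hθ' hep)]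
  · have hcompl : e * (1 - e) ∈ p := by
      rw [mul_sub, mul_one, (he : IsIdempotentElem e).eq, sub_self]
      exact p.zero_mem
    have h1 : 1 - e ∈ p := (Ideal.IsPrime.mem_or_mem ‹_› hcompl).resolve_left hep
    have h := RingHom.mem_ker.mp (hθ h1)
    have h' := RingHom.mem_ker.mp (hθ' h1)
    simp only [map_sub, map_one, sub_eq_zero] at h h'
    simp [← h, ← h']

end Idempotents

lemma injective_of_surjective_comap {R S : Type*} [CommRing R] [CommRing S] [IsReduced S]
    (φ : S →+* R) (hφ : Function.Surjective (PrimeSpectrum.comap φ)) : Function.Injective φ := by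
  rw [injective_iff_map_eq_zero]
  intro x hx
  have := (PrimeSpectrum.denseRange_comap_iff_ker_le_nilRadical φ).mp hφ.denseRange hx
  rwa [nilradical_eq_zero] at this

def SeparatedByPoints (K A : Type*) [Field K] [CommRing A] [Algebra K A] : Prop :=
  ∀ z : A, (∀ θ : A →ₐ[K] K, θ z = 0) → z = 0

section Nullstellensatz

variable {K A : Type*} [Field K] [IsAlgClosed K] [CommRing A] [Algebra K A]
  [Algebra.FiniteType K A]

lemma Ideal.IsMaximal.exists_algHom_ker_eq {m : Ideal A} (hm : m.IsMaximal) :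
    ∃ θ : A →ₐ[K] K, RingHom.ker θ = m := by
  let : Field (A ⧸ m) := Ideal.Quotient.field m
  have : Algebra.FiniteType K (A ⧸ m) :=
    .of_surjective (Ideal.Quotient.mkₐ K m) Ideal.Quotient.mk_surjective
  have : Module.Finite K (A ⧸ m) := finite_of_finite_type_of_isJacobsonRing K (A ⧸ m)
  refine ⟨IsAlgClosed.lift.comp (Ideal.Quotient.mkₐ K m), ?_⟩
  ext z
  simp [RingHom.mem_ker, Ideal.Quotient.eq_zero_iff_mem]

lemma separatedByPoints_of_isReduced [IsReduced A] : SeparatedByPoints K A := by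
  intro z hz
  have : IsJacobsonRing A := isJacobsonRing_of_finiteType (A := K)
  suffices z ∈ (⊥ : Ideal A).jacobson by
    rw [← Ideal.radical_eq_jacobson] at this
    obtain ⟨n, hn⟩ := this
    exact IsNilpotent.eq_zero ⟨n, hn⟩
  refine Ideal.mem_sInf.mpr fun m ⟨_, hm⟩ => ?_
  obtain ⟨θ, hθ⟩ := hm.exists_algHom_ker_eq (K := K)
  exact hθ ▸ hz θ

end Nullstellensatz

lemma SeparatedByPoints.mem_span_idempotents_of_finite_range {K A : Type*} [Field K] [CommRing A]
    [Algebra K A] (hA : SeparatedByPoints K A) {u : A}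
    (hu : (Set.range fun θ : A →ₐ[K] K => θ u).Finite) :
    u ∈ Submodule.span K {e : A | IsIdempotentElem e} := by
  refine mem_span_idempotents_of_prod_sub_eq_zero (t := hu.toFinset) (hA _ fun θ => ?_)
  rw [map_prod]
  exact Finset.prod_eq_zero (hu.mem_toFinset.mpr ⟨θ, rfl⟩) (by simp)

lemma TensorProduct.eq_zero_of_forall_rTensor_eq_zero {K M N ι : Type*} [Field K]
    [AddCommGroup M] [Module K M] [AddCommGroup N] [Module K N] (f : ι → Module.Dual K M)
    (hf : ∀ m, (∀ i, f i m = 0) → m = 0) {z : M ⊗[K] N} (hz : ∀ i, (f i).rTensor N z = 0) :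
    z = 0 := by
  classical
  let b := Module.Free.chooseBasis K N
  apply (equivFinsuppOfBasisRight b).injective
  ext j
  refine hf _ fun i => ?_
  have hcomm : ∀ y : M ⊗[K] N, f i (equivFinsuppOfBasisRight b y j) =
      b.coord j (TensorProduct.lid K N ((f i).rTensor N y)) := by
    intro y
    induction y with
    | zero => simp
    | tmul m n => simp [mul_comm]
    | add x y hx hy => simp [hx, hy]
  simp [hcomm, hz i]

section TensorProductPoints

variable {K R S : Type*} [Field K] [CommRing R] [Algebra K R] [CommRing S] [Algebra K S]

noncomputable def specializeLeft (θ : R →ₐ[K] K) : R ⊗[K] S →ₐ[K] S :=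
  (Algebra.TensorProduct.lid K S).toAlgHom.comp (Algebra.TensorProduct.map θ (AlgHom.id K S))

noncomputable def specializeRight (θ : S →ₐ[K] K) : R ⊗[K] S →ₐ[K] R :=
  (Algebra.TensorProduct.rid K K R).toAlgHom.comp (Algebra.TensorProduct.map (AlgHom.id K R) θ)

lemma comp_specializeLeft (θ₁ : R →ₐ[K] K) (θ₂ : S →ₐ[K] K) :
    θ₂.comp (specializeLeft θ₁) = Algebra.TensorProduct.productMap θ₁ θ₂ :=
  Algebra.TensorProduct.ext' fun r s => by simp [specializeLeft, Algebra.smul_def]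

lemma apply_specializeLeft (θ₁ : R →ₐ[K] K) (θ₂ : S →ₐ[K] K) (z : R ⊗[K] S) :
    θ₂ (specializeLeft θ₁ z) = θ₁ (specializeRight θ₂ z) := by
  rw [← AlgHom.comp_apply, comp_specializeLeft, ← AlgHom.comp_apply]
  exact AlgHom.congr_fun (Algebra.TensorProduct.ext' fun r s => by
    simp [specializeRight, Algebra.smul_def, mul_comm]) z

lemma productMap_comp_include (θ : R ⊗[K] S →ₐ[K] K) :
    Algebra.TensorProduct.productMap (θ.comp Algebra.TensorProduct.includeLeft)
      (θ.comp Algebra.TensorProduct.includeRight) = θ :=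
  Algebra.TensorProduct.ext' fun r s => by simp [← map_mul]

lemma SeparatedByPoints.tensorProduct (hR : SeparatedByPoints K R) (hS : SeparatedByPoints K S) :
    SeparatedByPoints K (R ⊗[K] S) := by
  intro z hz
  refine TensorProduct.eq_zero_of_forall_rTensor_eq_zero (fun θ : R →ₐ[K] K => θ.toLinearMap)
    hR fun θ₁ => (TensorProduct.lid K S).injective ?_
  rw [map_zero]
  refine hS _ fun θ₂ => ?_
  have := hz (Algebra.TensorProduct.productMap θ₁ θ₂)
  rw [← comp_specializeLeft θ₁ θ₂] at this
  exact this

/-- `specializeLeft θ₁ z` depends on `θ₁` only through a minimal prime below its kernel, that is,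
an irreducible component of `Spec R` through the point `θ₁`; there are finitely many of those. -/
lemma finite_range_specializeLeft [IsNoetherianRing R] (hS : SeparatedByPoints K S)
    {z : R ⊗[K] S}
    (hz : ∀ θ₂ : S →ₐ[K] K, specializeRight θ₂ z ∈ Submodule.span K {e : R | IsIdempotentElem e}) :
    (Set.range fun θ₁ : R →ₐ[K] K => specializeLeft θ₁ z).Finite := by
  choose c hc hcθ using fun θ₁ : R →ₐ[K] K =>
    have := RingHom.ker_isPrime θ₁
    Ideal.exists_minimalPrimes_le (I := ⊥) (J := RingHom.ker θ₁) bot_le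
  have hfac : (fun θ₁ : R →ₐ[K] K => specializeLeft θ₁ z).FactorsThrough c := by
    intro θ₁ θ₁' hθ
    have := (hc θ₁).1.1
    refine sub_eq_zero.mp (hS _ fun θ₂ => ?_)
    rw [map_sub, sub_eq_zero, apply_specializeLeft, apply_specializeLeft]
    exact θ₁.apply_eq_of_mem_span_idempotents θ₁' (c θ₁) (hcθ θ₁) (hθ ▸ hcθ θ₁') (hz θ₂)
  rw [← hfac.extend_comp (0 : Ideal R → S), Set.range_comp]
  exact ((minimalPrimes.finite_of_isNoetherianRing R).subset (Set.range_subset_iff.mpr hc)).image _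

lemma finite_range_algHom_apply_tensorProduct [IsNoetherianRing R] (hS : SeparatedByPoints K S)
    {z : R ⊗[K] S}
    (hzR : ∀ θ₂ : S →ₐ[K] K, specializeRight θ₂ z ∈ Submodule.span K {e : R | IsIdempotentElem e})
    (hzS : ∀ θ₁ : R →ₐ[K] K, specializeLeft θ₁ z ∈ Submodule.span K {e : S | IsIdempotentElem e}) :
    (Set.range fun θ : R ⊗[K] S →ₐ[K] K => θ z).Finite := by
  refine ((finite_range_specializeLeft hS hzR).biUnion
    (t := fun s => Set.range fun θ₂ : S →ₐ[K] K => θ₂ s) ?_).subset ?_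
  · rintro _ ⟨θ₁, rfl⟩
    exact (isIntegral_of_mem_span_idempotents (hzS θ₁)).finite_range_algHom_apply
  rintro _ ⟨θ, rfl⟩
  refine Set.mem_biUnion ⟨θ.comp Algebra.TensorProduct.includeLeft, rfl⟩
    ⟨θ.comp Algebra.TensorProduct.includeRight, ?_⟩
  dsimp only
  rw [← AlgHom.comp_apply, comp_specializeLeft, productMap_comp_include]

end TensorProductPoints

lemma PropP.isLocConst_of_isUnit {R : Type*} [CommRing R] [Algebra ℂ R] (hR : PropP R) {x : R}
    (hx : IsUnit x) : IsLocConst R x := by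
  obtain ⟨u, rfl⟩ := hx
  exact hR u

lemma PropP.of_surjective_comap {R S : Type*} [CommRing R] [Algebra ℂ R] [CommRing S]
    [Algebra ℂ S] [IsReduced S] (φ : S →ₐ[ℂ] R)
    (hφ : Function.Surjective (PrimeSpectrum.comap (φ : S →+* R))) (hR : PropP R) : PropP S :=
  fun u => mem_span_idempotents_iff_isIntegral.mpr <|
    (isIntegral_algHom_iff φ (injective_of_surjective_comap _ hφ)).mp <|
      isIntegral_of_mem_span_idempotents (hR.isLocConst_of_isUnit (u.isUnit.map φ))

lemma PropP.tensorProduct {R S : Type*} [CommRing R] [Algebra ℂ R] [CommRing S] [Algebra ℂ S]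
    [IsReduced R] [IsReduced S] [Algebra.FiniteType ℂ R] [Algebra.FiniteType ℂ S]
    (hR : PropP R) (hS : PropP S) : PropP (R ⊗[ℂ] S) := by
  have : IsNoetherianRing R := Algebra.FiniteType.isNoetherianRing ℂ R
  have hRpts : SeparatedByPoints ℂ R := separatedByPoints_of_isReduced
  have hSpts : SeparatedByPoints ℂ S := separatedByPoints_of_isReduced
  intro w
  refine (hRpts.tensorProduct hSpts).mem_span_idempotents_of_finite_range ?_
  exact finite_range_algHom_apply_tensorProduct hSpts
    (fun θ₂ => hR.isLocConst_of_isUnit (w.isUnit.map _))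
    (fun θ₁ => hS.isLocConst_of_isUnit (w.isUnit.map _))

theorem propP_descends_and_products
    (R S : Type*) [CommRing R] [Algebra ℂ R] [CommRing S] [Algebra ℂ S]
    [IsReduced R] [IsReduced S] [Algebra.FiniteType ℂ R] [Algebra.FiniteType ℂ S] :
    -- (a) descent along a surjective morphism `Spec R → Spec S`
    ((∀ φ : S →ₐ[ℂ] R, Function.Surjective (PrimeSpectrum.comap (φ : S →+* R)) →
        PropP R → PropP S) ∧
    -- (b) products
      (PropP R → PropP S → PropP (R ⊗[ℂ] S))) :=
  ⟨PropP.of_surjective_comap, PropP.tensorProduct⟩
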